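/- arXiv:0907.4244 — 7 statements merged into one kernel-verified Lean document; each statement's English description precedes it below -/
import Mathlib

section
/- Let ℋ be the set of holomorphic functions f on the upper half-plane ℂ₊ satisfying Im f(z) ≥ 0 and |f(z)| ≤ 1/Im(z) for all z ∈ ℂ₊. Suppose (f_i)_{i∈V} and (g_i)_{i∈V} in ℋ^V both satisfy, on a locally finite rooted tree T=(V,E), the recursion f_i(z) = −(z + Σ_{j∈D(i)} f_j(z))^{-1} for every vertex i, where D(i) is the set of children of i. If the number of vertices at depth n from the root grows at most exponentially in n (limsup |∂(T)_n|^{1/n} < ∞), then f_i = g_i for all i ∈ V. -/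
/-!
For `Im z = y` the map `w ↦ -(z + w)⁻¹` is a `y⁻²`-contraction on `{Im w ≥ 0}`, so the
differences `e_i = |f_i(z) - g_i(z)|` satisfy `e_i ≤ y⁻² ∑_{j ∈ D(i)} e_j`. Iterating `n` times
bounds `e_i` by `y⁻²ⁿ` times a sum over the `n`-th generation below `i`, which has at most
`C^(depth i + n)` terms, each at most `2 / y`. Once `y² > C` this tends to `0`, so `f_i = g_i`
on `{Im z > max C 1}`, and hence on all of `ℂ₊` by the identity theorem.
-/

open Filter Topology

/-- The class `ℋ` of holomorphic functions on the upper half-plane `ℂ₊` with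
`Im f(z) ≥ 0` and `|f(z)| ≤ 1/Im z`. -/
def IsH (f : ℂ → ℂ) : Prop :=
  DifferentiableOn ℂ f {z : ℂ | 0 < z.im} ∧
    ∀ z : ℂ, 0 < z.im → 0 ≤ (f z).im ∧ ‖f z‖ ≤ (z.im)⁻¹

section Descendants

variable {V : Type*} (children : V → Finset V)

open Classical in
noncomputable def descendants : ℕ → V → Finset V
  | 0, i => {i}
  | n + 1, i => (children i).biUnion (descendants n)

variable {children}

lemma depth_of_mem_descendants {depth : V → ℕ}
    (hdepth : ∀ i j, j ∈ children i → depth j = depth i + 1) :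
    ∀ {n : ℕ} {i k : V}, k ∈ descendants children n i → depth k = depth i + n
  | 0, i, k, hk => by
    rw [descendants, Finset.mem_singleton] at hk
    rw [hk, add_zero]
  | n + 1, i, k, hk => by
    classical
    obtain ⟨j, hj, hkj⟩ := Finset.mem_biUnion.mp hk
    rw [depth_of_mem_descendants hdepth hkj, hdepth i j hj, add_right_comm, add_assoc]

lemma eq_of_mem_descendants (hinj : ∀ i i' j, j ∈ children i → j ∈ children i' → i = i') :
    ∀ {n : ℕ} {i i' k : V}, k ∈ descendants children n i → k ∈ descendants children n i' →
      i = i'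
  | 0, i, i', k, hk, hk' => by
    rw [descendants, Finset.mem_singleton] at hk hk'
    rw [← hk, hk']
  | n + 1, i, i', k, hk, hk' => by
    classical
    obtain ⟨j, hj, hkj⟩ := Finset.mem_biUnion.mp hk
    obtain ⟨j', hj', hkj'⟩ := Finset.mem_biUnion.mp hk'
    obtain rfl := eq_of_mem_descendants hinj hkj hkj'
    exact hinj i i' j hj hj'

lemma sum_descendants_succ {β : Type*} [AddCommMonoid β]
    (hinj : ∀ i i' j, j ∈ children i → j ∈ children i' → i = i') (e : V → β) (n : ℕ) (i : V) :
    ∑ k ∈ descendants children (n + 1) i, e k =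
      ∑ j ∈ children i, ∑ k ∈ descendants children n j, e k := by
  classical
  refine Finset.sum_biUnion fun j _ j' _ hne => Finset.disjoint_left.mpr fun _ hk hk' => ?_
  exact hne (eq_of_mem_descendants hinj hk hk')

lemma card_descendants_le {depth : V → ℕ}
    (hdepth : ∀ i j, j ∈ children i → depth j = depth i + 1)
    (hfin : ∀ n, {v : V | depth v = n}.Finite) (n : ℕ) (i : V) :
    (descendants children n i).card ≤ (hfin (depth i + n)).toFinset.card :=
  Finset.card_le_card fun _ hk =>
    (hfin _).mem_toFinset.mpr (depth_of_mem_descendants hdepth hk)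

lemma le_pow_mul_sum_descendants (hinj : ∀ i i' j, j ∈ children i → j ∈ children i' → i = i')
    {e : V → ℝ} {r : ℝ} (hr : 0 ≤ r) (hstep : ∀ i, e i ≤ r * ∑ j ∈ children i, e j) :
    ∀ (n : ℕ) (i : V), e i ≤ r ^ n * ∑ k ∈ descendants children n i, e k
  | 0, i => by simp [descendants]
  | n + 1, i =>
    calc e i ≤ r * ∑ j ∈ children i, e j := hstep i
      _ ≤ r * ∑ j ∈ children i, r ^ n * ∑ k ∈ descendants children n j, e k := by
        gcongr with j
        exact le_pow_mul_sum_descendants hinj hr hstep n j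
      _ = r ^ (n + 1) * ∑ k ∈ descendants children (n + 1) i, e k := by
        rw [sum_descendants_succ hinj, ← Finset.mul_sum, pow_succ', mul_assoc]

lemma le_zero_of_le_mul_sum_children {depth : V → ℕ}
    (hdepth : ∀ i j, j ∈ children i → depth j = depth i + 1)
    (hinj : ∀ i i' j, j ∈ children i → j ∈ children i' → i = i')
    (hfin : ∀ n, {v : V | depth v = n}.Finite) {C : ℝ}
    (hC : ∀ n, (((hfin n).toFinset.card : ℝ)) ≤ C ^ n)
    {r : ℝ} (hr : 0 ≤ r) (hrC : r * C < 1) {e : V → ℝ} {M : ℝ} (hM : 0 ≤ M)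
    (he : ∀ i, e i ≤ M) (hstep : ∀ i, e i ≤ r * ∑ j ∈ children i, e j) (i : V) :
    e i ≤ 0 := by
  have hC0 : 0 ≤ C := by simpa using (Nat.cast_nonneg _).trans (hC 1)
  have hbound : ∀ n, e i ≤ (r * C) ^ n * (C ^ depth i * M) := fun n =>
    calc e i ≤ r ^ n * ∑ k ∈ descendants children n i, e k :=
          le_pow_mul_sum_descendants hinj hr hstep n i
      _ ≤ r ^ n * ((descendants children n i).card * M) := by
          gcongr
          simpa using Finset.sum_le_card_nsmul _ _ M fun k _ => he k
      _ ≤ r ^ n * (C ^ (depth i + n) * M) := by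
          gcongr
          exact (Nat.cast_le.mpr (card_descendants_le hdepth hfin n i)).trans (hC _)
      _ = (r * C) ^ n * (C ^ depth i * M) := by ring
  have hlim : Tendsto (fun n => (r * C) ^ n * (C ^ depth i * M)) atTop (𝓝 0) := by
    simpa using (tendsto_pow_atTop_nhds_zero_of_lt_one (by positivity) hrC).mul_const
      (C ^ depth i * M)
  exact ge_of_tendsto' hlim hbound

end Descendants

lemma norm_inv_sub_inv_le_of_le_im {a b : ℂ} {y : ℝ} (hy : 0 < y) (ha : y ≤ a.im)
    (hb : y ≤ b.im) : ‖a⁻¹ - b⁻¹‖ ≤ (y ^ 2)⁻¹ * ‖a - b‖ := by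
  have hna : y ≤ ‖a‖ := ha.trans (Complex.im_le_norm a)
  have hnb : y ≤ ‖b‖ := hb.trans (Complex.im_le_norm b)
  have ha0 : a ≠ 0 := norm_pos_iff.mp (hy.trans_le hna)
  have hb0 : b ≠ 0 := norm_pos_iff.mp (hy.trans_le hnb)
  rw [inv_sub_inv ha0 hb0, norm_div, norm_mul, norm_sub_rev, div_eq_inv_mul, sq]
  gcongr

lemma norm_neg_inv_add_sum_sub_le {ι : Type*} (s : Finset ι) {z : ℂ} (hz : 0 < z.im)
    {u v : ι → ℂ} (hu : ∀ j, 0 ≤ (u j).im) (hv : ∀ j, 0 ≤ (v j).im) :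
    ‖-(z + ∑ j ∈ s, u j)⁻¹ - -(z + ∑ j ∈ s, v j)⁻¹‖ ≤ (z.im ^ 2)⁻¹ * ∑ j ∈ s, ‖u j - v j‖ := by
  have him {w : ι → ℂ} (hw : ∀ j, 0 ≤ (w j).im) : z.im ≤ (z + ∑ j ∈ s, w j).im := by
    rw [Complex.add_im, Complex.im_sum]
    exact le_add_of_nonneg_right (Finset.sum_nonneg fun j _ => hw j)
  calc ‖-(z + ∑ j ∈ s, u j)⁻¹ - -(z + ∑ j ∈ s, v j)⁻¹‖
      ≤ (z.im ^ 2)⁻¹ * ‖(z + ∑ j ∈ s, v j) - (z + ∑ j ∈ s, u j)‖ := by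
        rw [neg_sub_neg]
        exact norm_inv_sub_inv_le_of_le_im hz (him hv) (him hu)
    _ ≤ (z.im ^ 2)⁻¹ * ∑ j ∈ s, ‖u j - v j‖ := by
        rw [add_sub_add_left_eq_sub, ← Finset.sum_sub_distrib]
        gcongr
        exact (norm_sum_le _ _).trans_eq (Finset.sum_congr rfl fun j _ => norm_sub_rev _ _)

lemma IsH.norm_sub_le {f g : ℂ → ℂ} (hf : IsH f) (hg : IsH g) {z : ℂ} (hz : 0 < z.im) :
    ‖f z - g z‖ ≤ 2 * z.im⁻¹ :=
  calc ‖f z - g z‖ ≤ ‖f z‖ + ‖g z‖ := _root_.norm_sub_le _ _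
    _ ≤ z.im⁻¹ + z.im⁻¹ := add_le_add (hf.2 z hz).2 (hg.2 z hz).2
    _ = 2 * z.im⁻¹ := (two_mul _).symm

lemma eqOn_im_pos_of_eqOn_im_gt {f g : ℂ → ℂ} (hf : DifferentiableOn ℂ f {z | 0 < z.im})
    (hg : DifferentiableOn ℂ g {z | 0 < z.im}) {c : ℝ} (h : Set.EqOn f g {z | c < z.im}) :
    Set.EqOn f g {z | 0 < z.im} := by
  have hopen : IsOpen {z : ℂ | 0 < z.im} := isOpen_lt continuous_const Complex.continuous_im
  set z₀ : ℂ := (|c| + 1) * Complex.I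
  have hz₀ : z₀.im = |c| + 1 := by simp [z₀]
  have hfar : f =ᶠ[𝓝 z₀] g := Filter.eventuallyEq_of_mem
    ((isOpen_lt continuous_const Complex.continuous_im).mem_nhds
      (show c < z₀.im by rw [hz₀]; linarith [le_abs_self c])) h
  exact (hf.analyticOnNhd hopen).eqOn_of_preconnected_of_eventuallyEq (hg.analyticOnNhd hopen)
    (convex_halfSpace_im_gt 0).isPreconnected
    (show 0 < z₀.im by rw [hz₀]; positivity) hfar

theorem resolvent_recursion_unique_general {V : Type*} (children : V → Finset V)
    (depth : V → ℕ)
    (hdepth : ∀ i j, j ∈ children i → depth j = depth i + 1)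
    (hinj : ∀ i i' j, j ∈ children i → j ∈ children i' → i = i')
    (hfin : ∀ n, {v : V | depth v = n}.Finite)
    (hexp : ∃ C : ℝ, ∀ n, (((hfin n).toFinset.card : ℝ)) ≤ C ^ n)
    (f g : V → ℂ → ℂ) (hf : ∀ i, IsH (f i)) (hg : ∀ i, IsH (g i))
    (hfrec : ∀ (i : V) (z : ℂ), 0 < z.im → f i z = -(z + ∑ j ∈ children i, f j z)⁻¹)
    (hgrec : ∀ (i : V) (z : ℂ), 0 < z.im → g i z = -(z + ∑ j ∈ children i, g j z)⁻¹) :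
    ∀ (i : V) (z : ℂ), 0 < z.im → f i z = g i z := by
  obtain ⟨C, hC⟩ := hexp
  have hfar (i : V) : Set.EqOn (f i) (g i) {z | max C 1 < z.im} := by
    intro z hz
    have hy1 : 1 < z.im := (le_max_right C 1).trans_lt hz
    have hy : 0 < z.im := one_pos.trans hy1
    have hrC : (z.im ^ 2)⁻¹ * C < 1 := by
      rw [inv_mul_lt_one₀ (by positivity)]
      nlinarith [le_max_left C 1, (le_max_left C 1).trans_lt hz]
    refine sub_eq_zero.mp (norm_le_zero_iff.mp ?_)
    refine le_zero_of_le_mul_sum_children hdepth hinj hfin hC (by positivity) hrC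
      (by positivity) (fun k => (hf k).norm_sub_le (hg k) hy) (fun k => ?_) i
    rw [hfrec k z hy, hgrec k z hy]
    exact norm_neg_inv_add_sum_sub_le _ hy (fun j => ((hf j).2 z hy).1)
      (fun j => ((hg j).2 z hy).1)
  exact fun i z hz => eqOn_im_pos_of_eqOn_im_gt (hf i).1 (hg i).1 (hfar i) hz

/-- On a locally finite rooted tree whose generation sizes grow at most
exponentially, the system of resolvent recursions `f_i(z) = −(z + Σ_{j∈D(i)} f_j(z))⁻¹`
has at most one solution in `ℋ^V`. -/
theorem resolvent_recursion_unique {V : Type*} (root : V) (children : V → Finset V)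
    (depth : V → ℕ)
    (hroot : depth root = 0)
    (hdepth : ∀ i j, j ∈ children i → depth j = depth i + 1)
    (hinj : ∀ i i' j, j ∈ children i → j ∈ children i' → i = i')
    (hfin : ∀ n, {v : V | depth v = n}.Finite)
    (hexp : ∃ C : ℝ, ∀ n, (((hfin n).toFinset.card : ℝ)) ≤ C ^ n)
    (f g : V → ℂ → ℂ) (hf : ∀ i, IsH (f i)) (hg : ∀ i, IsH (g i))
    (hfrec : ∀ (i : V) (z : ℂ), 0 < z.im → f i z = -(z + ∑ j ∈ children i, f j z)⁻¹)
    (hgrec : ∀ (i : V) (z : ℂ), 0 < z.im → g i z = -(z + ∑ j ∈ children i, g j z)⁻¹) :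
    ∀ (i : V) (z : ℂ), 0 < z.im → f i z = g i z :=
  resolvent_recursion_unique_general children depth hdepth hinj hfin hexp f g hf hg hfrec hgrec
end

section
/- Let f, g ∈ ℋ (holomorphic on ℂ₊ with Im f ≥ 0 and |f(z)| ≤ 1/Im z) and finite index sets with functions f_j, g_j ∈ ℋ such that f(z) = −(z + Σ_j f_j(z))^{-1} and g(z) = −(z + Σ_j g_j(z))^{-1}. Then for all z ∈ ℂ₊, |f(z) − g(z)| ≤ (Im z)^{-2} Σ_j |f_j(z) − g_j(z)|. -/
/-- A contraction estimate for the resolvent recursion: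
if `f(z) = −(z + Σ_j F_j(z))⁻¹` and `g(z) = −(z + Σ_j G_j(z))⁻¹` with all functions in `ℋ`,
then `|f(z) − g(z)| ≤ (Im z)⁻² Σ_j |F_j(z) − G_j(z)|`. -/
theorem resolvent_recursion_contraction {ι : Type*} (s : Finset ι)
    (f g : ℂ → ℂ) (F G : ι → ℂ → ℂ)
    (hfH : IsH f) (hgH : IsH g)
    (hFH : ∀ j ∈ s, IsH (F j)) (hGH : ∀ j ∈ s, IsH (G j))
    (hf : ∀ z : ℂ, 0 < z.im → f z = -(z + ∑ j ∈ s, F j z)⁻¹)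
    (hg : ∀ z : ℂ, 0 < z.im → g z = -(z + ∑ j ∈ s, G j z)⁻¹) :
    ∀ z : ℂ, 0 < z.im →
      ‖f z - g z‖ ≤ ((z.im)⁻¹) ^ 2 * ∑ j ∈ s, ‖F j z - G j z‖ := by
  intro z hz
  set A : ℂ := z + ∑ j ∈ s, F j z with hA
  set B : ℂ := z + ∑ j ∈ s, G j z with hB
  have hAim : z.im ≤ A.im := by
    have h : 0 ≤ ∑ j ∈ s, (F j z).im :=
      Finset.sum_nonneg fun j hj => ((hFH j hj).2 z hz).1
    simp only [hA, Complex.add_im, Complex.im_sum]; linarith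
  have hBim : z.im ≤ B.im := by
    have h : 0 ≤ ∑ j ∈ s, (G j z).im :=
      Finset.sum_nonneg fun j hj => ((hGH j hj).2 z hz).1
    simp only [hB, Complex.add_im, Complex.im_sum]; linarith
  have hAn : z.im ≤ ‖A‖ := le_trans (le_trans hAim (le_abs_self _)) (Complex.abs_im_le_norm A)
  have hBn : z.im ≤ ‖B‖ := le_trans (le_trans hBim (le_abs_self _)) (Complex.abs_im_le_norm B)
  have hA0 : A ≠ 0 := fun h => by simp [h] at hAim; linarith
  have hB0 : B ≠ 0 := fun h => by simp [h] at hBim; linarith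
  have key : f z - g z = (A - B) / (B * A) := by
    rw [hf z hz, hg z hz]
    rw [neg_sub_neg, inv_sub_inv hB0 hA0]
  rw [key]
  have hABsub : A - B = ∑ j ∈ s, (F j z - G j z) := by
    rw [hA, hB, Finset.sum_sub_distrib]; ring
  have h1 : ‖A - B‖ ≤ ∑ j ∈ s, ‖F j z - G j z‖ := by
    rw [hABsub]; exact norm_sum_le _ _
  rw [norm_div, norm_mul]
  have hpos : (0:ℝ) < z.im * z.im := mul_pos hz hz
  have h2 : z.im * z.im ≤ ‖B‖ * ‖A‖ :=
    mul_le_mul hBn hAn hz.le (norm_nonneg _)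
  calc ‖A - B‖ / (‖B‖ * ‖A‖)
      ≤ (∑ j ∈ s, ‖F j z - G j z‖) / (z.im * z.im) :=
        div_le_div₀ (Finset.sum_nonneg fun j _ => norm_nonneg _) h1 hpos h2
    _ = (z.im)⁻¹ ^ 2 * ∑ j ∈ s, ‖F j z - G j z‖ := by
        rw [← sq, div_eq_mul_inv, ← inv_pow]; ring
end

section
/- Let A be the adjacency matrix of a finite simple graph G, let u be a leaf of G (a vertex of degree 1) and v its unique neighbor, and let G' = G \ {u, v} be the graph obtained by deleting u, v and all their incident edges. Then dim ker A(G) = dim ker A(G'). -/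
open scoped Classical

/-- Removing a leaf `u` and its unique neighbor `v` from a finite simple
graph does not change the dimension of the kernel of the adjacency matrix. -/
theorem dim_ker_leaf_removal {V : Type*} [Fintype V] [DecidableEq V]
    (G : SimpleGraph V) (u v : V) (hleaf : G.degree u = 1) (hadj : G.Adj u v) :
    Module.finrank ℝ (LinearMap.ker (Matrix.toLin' (G.adjMatrix ℝ)))
      = Module.finrank ℝ (LinearMap.ker (Matrix.toLin'
          ((G.induce ((↑((Finset.univ.erase u).erase v) : Set V))).adjMatrix ℝ))) := by
  classical
  have huv : u ≠ v := G.ne_of_adj hadj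
  set T : Finset V := (Finset.univ.erase u).erase v with hT
  have hvT : v ∉ T := Finset.notMem_erase _ _
  have huT : u ∉ T := fun h => Finset.notMem_erase u Finset.univ (Finset.mem_of_mem_erase h)
  have hmemT : ∀ w : V, w ∈ T ↔ w ≠ v ∧ w ≠ u := by
    intro w; simp [hT, Finset.mem_erase]
  set S : Set V := (↑T : Set V) with hS
  have hmemS : ∀ w : V, w ∈ S ↔ w ∈ T := fun w => Finset.mem_coe
  set G' := G.induce S with hG'
  -- neighbor finset of u
  have hNu : G.neighborFinset u = {v} := by
    have hv : v ∈ G.neighborFinset u := (SimpleGraph.mem_neighborFinset _ _ _).mpr hadj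
    obtain ⟨a, ha⟩ := Finset.card_eq_one.mp (hleaf : (G.neighborFinset u).card = 1)
    rw [ha] at hv ⊢
    rw [Finset.mem_singleton] at hv
    rw [hv]
  have hadj_u : ∀ w, G.Adj u w ↔ w = v := fun w => by
    rw [← SimpleGraph.mem_neighborFinset, hNu, Finset.mem_singleton]
  -- splitting sums over V
  have hsplit : ∀ f : V → ℝ, ∑ z, f z = f u + f v + ∑ z ∈ T, f z := by
    intro f
    have h1 : insert v T = Finset.univ.erase u := by
      rw [hT]
      exact Finset.insert_erase (Finset.mem_erase.mpr ⟨Ne.symm huv, Finset.mem_univ v⟩)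
    have h2 : insert u (insert v T) = Finset.univ := by
      rw [h1]; exact Finset.insert_erase (Finset.mem_univ u)
    have huvT : u ∉ insert v T := by rw [h1]; exact Finset.notMem_erase u _
    rw [← h2, Finset.sum_insert huvT, Finset.sum_insert hvT]
    ring
  have hrow : ∀ (x : V → ℝ) (w : V), ∑ z ∈ G.neighborFinset w, x z
      = (if G.Adj w u then x u else 0) + (if G.Adj w v then x v else 0)
        + ∑ z ∈ T, (if G.Adj w z then x z else 0) := by
    intro x w
    rw [SimpleGraph.neighborFinset_eq_filter, Finset.sum_filter]
    exact hsplit _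
  have hkA : ∀ x : V → ℝ, x ∈ LinearMap.ker (Matrix.toLin' (G.adjMatrix ℝ))
      ↔ ∀ w : V, ∑ z ∈ G.neighborFinset w, x z = 0 := by
    intro x
    rw [LinearMap.mem_ker, Matrix.toLin'_apply, funext_iff]
    simp [SimpleGraph.adjMatrix_mulVec_apply]
  have hkA' : ∀ y : ↥S → ℝ, y ∈ LinearMap.ker (Matrix.toLin' (G'.adjMatrix ℝ))
      ↔ ∀ w : ↥S, ∑ z ∈ G'.neighborFinset w, y z = 0 := by
    intro y
    rw [LinearMap.mem_ker, Matrix.toLin'_apply, funext_iff]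
    simp [SimpleGraph.adjMatrix_mulVec_apply]
  -- extension of a function on S to V by zero
  set ext : (↥S → ℝ) → (V → ℝ) := fun y z => if h : z ∈ S then y ⟨z, h⟩ else 0 with hext
  have hext_coe : ∀ (y : ↥S → ℝ) (z : ↥S), ext y ↑z = y z := by
    intro y z
    rw [hext]
    simp
  have hextu : ∀ y : ↥S → ℝ, ext y u = 0 := by
    intro y; rw [hext]; simp only []
    rw [dif_neg]
    rw [hmemS]; exact huT
  have hextv : ∀ y : ↥S → ℝ, ext y v = 0 := by
    intro y; rw [hext]; simp only []
    rw [dif_neg]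
    rw [hmemS]; exact hvT
  -- conversion of sums over the subtype to sums over T
  have hconv : ∀ f : V → ℝ, ∑ z : ↥S, f ↑z = ∑ z ∈ T, f z := by
    intro f
    exact Finset.sum_finset_coe f T
  have hrow' : ∀ (y : ↥S → ℝ) (w : ↥S), ∑ z ∈ G'.neighborFinset w, y z
      = ∑ z ∈ T, (if G.Adj ↑w z then ext y z else 0) := by
    intro y w
    rw [SimpleGraph.neighborFinset_eq_filter, Finset.sum_filter, ← hconv]
    apply Finset.sum_congr rfl
    intro z _
    have h1 : G'.Adj w z ↔ G.Adj ↑w ↑z := by rw [hG']; simp [SimpleGraph.comap_adj]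
    rw [hext_coe]
    simp only [h1]
  -- the restriction linear map
  set R : (V → ℝ) →ₗ[ℝ] (↥S → ℝ) := LinearMap.funLeft ℝ ℝ (fun z : ↥S => (z : V)) with hR
  have hRapp : ∀ (x : V → ℝ) (w : ↥S), R x w = x ↑w := fun _ _ => rfl
  -- facts about kernel elements of A
  have hxv0 : ∀ x : V → ℝ, x ∈ LinearMap.ker (Matrix.toLin' (G.adjMatrix ℝ)) → x v = 0 := by
    intro x hx
    have := (hkA x).mp hx u
    rwa [hNu, Finset.sum_singleton] at this
  have hxT : ∀ x : V → ℝ, x ∈ LinearMap.ker (Matrix.toLin' (G.adjMatrix ℝ)) →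
      ∀ w ∈ T, ∑ z ∈ T, (if G.Adj w z then x z else 0) = 0 := by
    intro x hx w hw
    have h0 := (hkA x).mp hx w
    rw [hrow] at h0
    have hwu : ¬ G.Adj w u := by
      rw [G.adj_comm, hadj_u]
      exact ((hmemT w).mp hw).1
    rw [if_neg hwu, hxv0 x hx] at h0
    simpa using h0
  have hmain : ∀ x ∈ LinearMap.ker (Matrix.toLin' (G.adjMatrix ℝ)),
      R x ∈ LinearMap.ker (Matrix.toLin' (G'.adjMatrix ℝ)) := by
    intro x hx
    rw [hkA']
    intro w
    rw [hrow']
    have hwT : (↑w : V) ∈ T := (hmemS _).mp w.2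
    have : ∑ z ∈ T, (if G.Adj ↑w z then ext (R x) z else 0)
        = ∑ z ∈ T, (if G.Adj ↑w z then x z else 0) := by
      apply Finset.sum_congr rfl
      intro z hz
      have hzS : z ∈ S := (hmemS z).mpr hz
      have : ext (R x) z = x z := by
        rw [hext]
        simp only [dif_pos hzS]
        exact hRapp x ⟨z, hzS⟩
      rw [this]
    rw [this]
    exact hxT x hx ↑w hwT
  set Φ := R.restrict hmain with hΦ
  have hinj : Function.Injective Φ := by
    rw [← LinearMap.ker_eq_bot]
    rw [Submodule.eq_bot_iff]
    rintro ⟨x, hx⟩ hx0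
    have hres : ∀ z : ↥S, x ↑z = 0 := by
      intro z
      have : Φ ⟨x, hx⟩ = 0 := hx0
      have := congrFun (Subtype.ext_iff.mp this) z
      simpa [hΦ, LinearMap.restrict_apply, hRapp] using this
    have hxv : x v = 0 := hxv0 x hx
    have hxz : ∀ z ∈ T, x z = 0 := fun z hz => hres ⟨z, (hmemS z).mpr hz⟩
    have hxu : x u = 0 := by
      have h0 := (hkA x).mp hx v
      rw [hrow] at h0
      have h1 : G.Adj v u := hadj.symm
      have h2 : ¬ G.Adj v v := G.irrefl
      rw [if_pos h1, if_neg h2] at h0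
      have h3 : ∑ z ∈ T, (if G.Adj v z then x z else 0) = 0 := by
        apply Finset.sum_eq_zero
        intro z hz
        simp [hxz z hz]
      rw [h3] at h0
      linarith
    apply Subtype.ext
    funext w
    by_cases hwu : w = u
    · rw [hwu]; exact hxu
    by_cases hwv : w = v
    · rw [hwv]; exact hxv
    · exact hxz w ((hmemT w).mpr ⟨hwv, hwu⟩)
  have hsurj : Function.Surjective Φ := by
    rintro ⟨y, hy⟩
    have hyT : ∀ w : ↥S, ∑ z ∈ T, (if G.Adj ↑w z then ext y z else 0) = 0 := by
      intro w
      rw [← hrow']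
      exact (hkA' y).mp hy w
    set c : ℝ := ∑ z ∈ T, (if G.Adj v z then ext y z else 0) with hc
    set x : V → ℝ := fun z => if z = u then -c else ext y z with hx
    have hxu : x u = -c := by rw [hx]; simp
    have hxv : x v = 0 := by
      rw [hx]; simp only []
      rw [if_neg (Ne.symm huv), hextv]
    have hxT' : ∀ z ∈ T, x z = ext y z := by
      intro z hz
      rw [hx]; simp only []
      rw [if_neg]
      intro h; exact huT (h ▸ hz)
    have hTx : ∀ w : V, ∑ z ∈ T, (if G.Adj w z then x z else 0)
        = ∑ z ∈ T, (if G.Adj w z then ext y z else 0) := by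
      intro w
      apply Finset.sum_congr rfl
      intro z hz
      rw [hxT' z hz]
    have hxker : x ∈ LinearMap.ker (Matrix.toLin' (G.adjMatrix ℝ)) := by
      rw [hkA]
      intro w
      rw [hrow, hTx]
      by_cases hwu : w = u
      · rw [hwu]
        rw [if_neg G.irrefl, if_pos hadj, hxv]
        have h4 : ∑ z ∈ T, (if G.Adj u z then ext y z else 0) = 0 := by
          apply Finset.sum_eq_zero
          intro z hz
          have h5 : ¬ G.Adj u z := by
            rw [hadj_u]
            exact ((hmemT z).mp hz).1
          rw [if_neg h5]
        rw [h4]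
        ring
      by_cases hwv : w = v
      · rw [hwv]
        rw [if_pos hadj.symm, if_neg G.irrefl, hxu, ← hc]
        ring
      · have hwT : w ∈ T := (hmemT w).mpr ⟨hwv, hwu⟩
        have h1 : ¬ G.Adj w u := by
          rw [G.adj_comm, hadj_u]; exact hwv
        rw [if_neg h1, hxv, hyT ⟨w, (hmemS w).mpr hwT⟩]
        simp
    refine ⟨⟨x, hxker⟩, ?_⟩
    apply Subtype.ext
    funext w
    have hwT : (↑w : V) ∈ T := (hmemS _).mp w.2
    have hwu : (↑w : V) ≠ u := ((hmemT _).mp hwT).2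
    have : Φ ⟨x, hxker⟩ = R.restrict hmain ⟨x, hxker⟩ := rfl
    rw [this]
    have : (R.restrict hmain ⟨x, hxker⟩ : ↥S → ℝ) w = x ↑w := rfl
    rw [this, hx]
    simp only [if_neg hwu]
    exact hext_coe y w
  exact LinearEquiv.finrank_eq (LinearEquiv.ofBijective Φ ⟨hinj, hsurj⟩)
end

section
/- Let G be a finite simple graph with adjacency matrix A. For every step t of the Karp–Sipser leaf removal algorithm (which constructs increasing vertex sets 𝒜_t of removed leaves and ℬ_t of removed leaf-neighbors), dim ker A ≥ |𝒜_t| − |ℬ_t|. -/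
/-!
The vectors supported on `𝒜_t` form a space of dimension `|𝒜_t|` that the adjacency matrix maps
into the vectors supported on `ℬ_t`, because every neighbour of a removed leaf is a removed
leaf-neighbour; rank–nullity for this restriction gives the bound. That neighbourhood property
survives each step only together with the companion fact that the neighbours of `P_t` lie in
`ℬ_t ∪ P_t`: a leaf of `G_t` has at most one neighbour in `G_t`, and its other neighbours can lie
neither in `𝒜_t` nor in `P_t`, hence lie in `ℬ_t`.
-/

open scoped Classical

variable {V : Type*}

/-- One step of the Karp–Sipser leaf removal algorithm: given the current removed sets
`(𝒜, ℬ, P)`, remove pendant leaves together with their neighbors. -/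
noncomputable def KSstep [Fintype V] (G : SimpleGraph V) :
    Finset V × Finset V × Finset V → Finset V × Finset V × Finset V :=
  fun T =>
    let A := T.1; let B := T.2.1; let P := T.2.2
    let R : Finset V := Finset.univ \ (A ∪ B ∪ P)
    let L : Finset V := R.filter fun v => (G.neighborFinset v ∩ R).card = 1
    let W : Finset V := (R \ L).filter fun v => ∃ u ∈ L, G.Adj u v
    (A ∪ L.filter fun u => ∃ v ∈ W, G.Adj u v,
      B ∪ W,
      P ∪ L.filter fun v => ∃ u ∈ L, G.Adj u v)

/-- The Karp–Sipser leaf removal algorithm: `(KS G t) = (𝒜_t, ℬ_t, P_t)`. -/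
noncomputable def KS [Fintype V] (G : SimpleGraph V) : ℕ → Finset V × Finset V × Finset V
  | 0 => (Finset.univ.filter fun v => G.degree v = 0, ∅, ∅)
  | t + 1 => KSstep G (KS G t)

open Module

section LinearAlgebra

variable {K M N : Type*} [Field K] [AddCommGroup M] [Module K M] [AddCommGroup N] [Module K N]

theorem Submodule.finrank_le_finrank_map_add_finrank_ker [FiniteDimensional K M]
    (f : M →ₗ[K] N) (U : Submodule K M) :
    finrank K U ≤ finrank K (U.map f) + finrank K (LinearMap.ker f) := by
  rw [← LinearMap.finrank_range_add_finrank_ker (f.domRestrict U), LinearMap.range_domRestrict]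
  gcongr
  rw [LinearMap.ker_domRestrict, ← Submodule.finrank_map_subtype_eq, Submodule.map_comap_subtype]
  exact Submodule.finrank_mono inf_le_right

theorem Matrix.card_le_card_add_finrank_ker_toLin' {m n : Type*} [Fintype m] [Fintype n]
    [DecidableEq n] (A : Matrix m n K) (s : Finset n) (t : Finset m)
    (hA : ∀ i ∉ t, ∀ j ∈ s, A i j = 0) :
    s.card ≤ t.card + finrank K (LinearMap.ker (Matrix.toLin' A)) := by
  have hmap :
      (Pi.spanSubset K (s : Set n)).map (Matrix.toLin' A) ≤ Pi.spanSubset K (t : Set m) := by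
    rintro _ ⟨v, hv, rfl⟩
    rw [SetLike.mem_coe, Pi.mem_spanSubset_iff] at hv
    rw [Pi.mem_spanSubset_iff]
    intro i hi
    refine Finset.sum_eq_zero fun j _ => ?_
    by_cases hj : j ∈ s
    · simp [hA i hi j hj]
    · simp [hv j hj]
  calc s.card = finrank K (Pi.spanSubset K (s : Set n)) := by simp
    _ ≤ finrank K ((Pi.spanSubset K (s : Set n)).map (Matrix.toLin' A))
          + finrank K (LinearMap.ker (Matrix.toLin' A)) :=
      Submodule.finrank_le_finrank_map_add_finrank_ker _ _
    _ ≤ t.card + finrank K (LinearMap.ker (Matrix.toLin' A)) := by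
      grw [Submodule.finrank_mono hmap]
      simp

end LinearAlgebra

section LeafRemoval

variable [Fintype V] (G : SimpleGraph V) (T : Finset V × Finset V × Finset V)

noncomputable def KSremaining : Finset V := Finset.univ \ (T.1 ∪ T.2.1 ∪ T.2.2)

noncomputable def KSleaves : Finset V :=
  (KSremaining T).filter fun v => (G.neighborFinset v ∩ KSremaining T).card = 1

noncomputable def KSleafNeighbors : Finset V :=
  (KSremaining T \ KSleaves G T).filter fun v => ∃ u ∈ KSleaves G T, G.Adj u v

lemma KSstep_eq : KSstep G T =
    (T.1 ∪ (KSleaves G T).filter (fun u => ∃ v ∈ KSleafNeighbors G T, G.Adj u v),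
      T.2.1 ∪ KSleafNeighbors G T,
      T.2.2 ∪ (KSleaves G T).filter fun v => ∃ u ∈ KSleaves G T, G.Adj u v) :=
  rfl

structure IsKSClosed : Prop where
  adj_fst : ∀ a ∈ T.1, ∀ y, G.Adj a y → y ∈ T.2.1
  adj_snd_snd : ∀ p ∈ T.2.2, ∀ y, G.Adj p y → y ∈ T.2.1 ∨ y ∈ T.2.2

variable {G T}

lemma KSleaves_subset_KSremaining : KSleaves G T ⊆ KSremaining T := Finset.filter_subset _ _

lemma KSleafNeighbors_subset_KSremaining : KSleafNeighbors G T ⊆ KSremaining T :=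
  (Finset.filter_subset _ _).trans Finset.sdiff_subset

lemma mem_KSremaining {v : V} : v ∈ KSremaining T ↔ v ∉ T.1 ∧ v ∉ T.2.1 ∧ v ∉ T.2.2 := by
  simp [KSremaining]

lemma IsKSClosed.eq_or_mem_of_adj_leaf (hT : IsKSClosed G T) {x y z : V} (hx : x ∈ KSleaves G T)
    (hxy : G.Adj x y) (hxz : G.Adj x z) (hz : z ∈ KSremaining T) : y = z ∨ y ∈ T.2.1 := by
  have hxR := mem_KSremaining.mp (KSleaves_subset_KSremaining hx)
  by_cases hy : y ∈ KSremaining T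
  · left
    have hcard := (Finset.mem_filter.mp hx).2
    exact Finset.card_le_one.mp hcard.le y (by simp [hxy, hy]) z (by simp [hxz, hz])
  · right
    by_contra hyB
    by_cases hyA : y ∈ T.1
    · exact hxR.2.1 (hT.adj_fst y hyA x hxy.symm)
    · have hyP : y ∈ T.2.2 := by simpa [mem_KSremaining, hyA, hyB] using hy
      exact (hT.adj_snd_snd y hyP x hxy.symm).elim hxR.2.1 hxR.2.2

lemma IsKSClosed.KSstep (hT : IsKSClosed G T) : IsKSClosed G (KSstep G T) := by
  rw [KSstep_eq]
  constructor
  · simp only [Finset.mem_union, Finset.mem_filter]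
    rintro a (ha | ⟨haL, w, hw, haw⟩) y hay
    · exact .inl (hT.adj_fst a ha y hay)
    · rcases hT.eq_or_mem_of_adj_leaf haL hay haw (KSleafNeighbors_subset_KSremaining hw) with
        rfl | hy
      · exact .inr hw
      · exact .inl hy
  · simp only [Finset.mem_union, Finset.mem_filter]
    rintro p (hp | ⟨hpL, u, hu, hpu⟩) y hpy
    · exact (hT.adj_snd_snd p hp y hpy).imp .inl .inl
    · rcases hT.eq_or_mem_of_adj_leaf hpL hpy hpu.symm (KSleaves_subset_KSremaining hu) with
        rfl | hy
      · exact .inr (.inr ⟨hu, p, hpL, hpu.symm⟩)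
      · exact .inl (.inl hy)

variable (G) in
lemma isKSClosed_KS (t : ℕ) : IsKSClosed G (KS G t) := by
  induction t with
  | zero =>
    refine ⟨fun a ha y hay => ?_, fun p hp => by simp [KS] at hp⟩
    simp only [KS, Finset.mem_filter, Finset.mem_univ, true_and] at ha
    exact absurd ha (G.degree_pos_iff_exists_adj a |>.mpr ⟨y, hay⟩).ne'
  | succ t ih => exact ih.KSstep

end LeafRemoval

/-- At every step `t` of the Karp–Sipser leaf removal algorithm,
`dim ker A(G) ≥ |𝒜_t| − |ℬ_t|`. -/
theorem dim_ker_ge_leaf_removal [Fintype V] (G : SimpleGraph V) (t : ℕ) :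
    ((KS G t).1.card : ℤ) - ((KS G t).2.1.card : ℤ)
      ≤ (Module.finrank ℝ (LinearMap.ker (Matrix.toLin' (G.adjMatrix ℝ))) : ℤ) := by
  have hcol : ∀ i ∉ (KS G t).2.1, ∀ a ∈ (KS G t).1, G.adjMatrix ℝ i a = 0 := fun i hi a ha => by
    simpa [SimpleGraph.adjMatrix_apply] using
      fun hia => hi ((isKSClosed_KS G t).adj_fst a ha i hia.symm)
  have := Matrix.card_le_card_add_finrank_ker_toLin' _ _ _ hcol
  omega
end

section
/- Let N ≥ 1 be a natural number and X₁,...,X_N random variables in [0,1]. Let Ŷ = (1 + Σ_{i=1}^{N} S_i^{-1})^{-1} with the convention 1/0 = ∞ and 1/∞ = 0, where S_i ≥ 0. Then Ŷ > 0 if and only if S_i > 0 for every i = 1,...,N. Consequently, if N ~ F, N'_i ~ F' i.i.d., X_{ij} ~ ν all independent and S_i = Σ_{j=1}^{N'_i} X_{ij}, then P(Y > 0) = φ(1 − φ'(1 − ν((0,1]))), where Y = (1 + Σ_{i=1}^{N}(Σ_{j=1}^{N'_i} X_{ij})^{-1})^{-1} and φ, φ' are the generating functions of F, F'. -/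
open MeasureTheory ProbabilityTheory
open scoped ENNReal

/-- Generating function of a probability distribution on `ℕ`:
`φ(x) = Σ F({n}) xⁿ`. -/
noncomputable def pgfMeas (F : Measure ℕ) (x : ℝ) : ℝ := ∑' n : ℕ, (F {n}).toReal * x ^ n

/-- The index type for the family `(N, (N'_i)_i, (X_{ij})_{ij})`. -/
def famType : Unit ⊕ ℕ ⊕ ℕ × ℕ → Type
  | Sum.inl _ => ℕ
  | Sum.inr (Sum.inl _) => ℕ
  | Sum.inr (Sum.inr _) => ℝ

instance famTypeMeasurableSpace : ∀ i, MeasurableSpace (famType i)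
  | Sum.inl _ => inferInstanceAs (MeasurableSpace ℕ)
  | Sum.inr (Sum.inl _) => inferInstanceAs (MeasurableSpace ℕ)
  | Sum.inr (Sum.inr _) => inferInstanceAs (MeasurableSpace ℝ)

/-- The combined family of random variables `N, N'_i, X_{ij}`. -/
def fam {Ω : Type*} (N : Ω → ℕ) (N' : ℕ → Ω → ℕ) (X : ℕ → ℕ → Ω → ℝ) :
    ∀ i : Unit ⊕ ℕ ⊕ ℕ × ℕ, Ω → famType i
  | Sum.inl _ => N
  | Sum.inr (Sum.inl i) => N' i
  | Sum.inr (Sum.inr p) => X p.1 p.2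

/-!
`Ŷ > 0` iff no term `Sᵢ⁻¹` is infinite, i.e. iff every `Sᵢ > 0`. Hence `Y > 0` iff each of the
`N` row sums `Sᵢ = Σ_{j<N'ᵢ} X_{ij}` is positive. Grouping the independent family into the blocks
`N` and `(N'ᵢ, X_{i0}, X_{i1}, …)` makes the row events independent of each other and of `N`, so
`P(Y > 0) = Σₙ F(n) qⁿ` with `q = P(Sᵢ > 0)`. A sum of nonnegative terms vanishes iff each term
does, so the same argument inside a row gives `1 - q = Σₘ F'(m) ν({0})ᵐ = φ'(1 - ν((0,1]))`.
-/

open Set Function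

theorem ENNReal.inv_one_add_sum_inv_pos_iff {ι : Type*} (s : Finset ι) (S : ι → ℝ≥0∞) :
    0 < (1 + ∑ i ∈ s, (S i)⁻¹)⁻¹ ↔ ∀ i ∈ s, 0 < S i := by
  simp [ENNReal.sum_eq_top, pos_iff_ne_zero]

theorem Measurable.sum_range_comp {Ω M : Type*} {mΩ : MeasurableSpace Ω} [AddCommMonoid M]
    [MeasurableSpace M] [MeasurableAdd₂ M] {K : Ω → ℕ} (hK : Measurable K) {Z : ℕ → Ω → M}
    (hZ : ∀ j, Measurable (Z j)) : Measurable fun ω => ∑ j ∈ Finset.range (K ω), Z j ω :=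
  (measurable_from_prod_countable_right (f := fun p : ℕ × Ω => ∑ j ∈ Finset.range p.1, Z j p.2)
    fun n => Finset.measurable_sum (Finset.range n) fun j _ => hZ j).comp (hK.prodMk measurable_id)

theorem tsum_measure_singleton_mul_pow_le_one (F : Measure ℕ) [IsProbabilityMeasure F]
    {c : ℝ≥0∞} (hc : c ≤ 1) : ∑' n, F {n} * c ^ n ≤ 1 := by
  calc ∑' n, F {n} * c ^ n = ∫⁻ n, c ^ n ∂F := by simp only [lintegral_countable', mul_comm]
    _ ≤ ∫⁻ _, 1 ∂F := lintegral_mono fun n => pow_le_one₀ zero_le hc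
    _ = 1 := by simp

theorem pgfMeas_toReal (F : Measure ℕ) [IsFiniteMeasure F] {c : ℝ≥0∞} (hc : c ≠ ∞) :
    pgfMeas F c.toReal = (∑' n, F {n} * c ^ n).toReal := by
  rw [ENNReal.tsum_toReal_eq fun n =>
    ENNReal.mul_ne_top (measure_ne_top F _) (ENNReal.pow_ne_top hc)]
  simp [pgfMeas, ENNReal.toReal_mul, ENNReal.toReal_pow]

namespace ProbabilityTheory

variable {Ω : Type*} {mΩ : MeasurableSpace Ω} {μ : Measure Ω}

theorem iIndep.iIndep_iSup_fiber {ι κ : Type*} {m : ι → MeasurableSpace Ω} (hm : iIndep m μ)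
    (hle : ∀ i, m i ≤ mΩ) (p : ι → κ) : iIndep (fun k => ⨆ i ∈ p ⁻¹' {k}, m i) μ := by
  classical
  refine iIndepSets.iIndep (fun k => iSup₂_le fun i _ => hle i)
    (fun k => piiUnionInter (fun i => {s | MeasurableSet[m i] s}) (p ⁻¹' {k}))
    (fun k => isPiSystem_piiUnionInter _
      (fun i => @MeasurableSpace.isPiSystem_measurableSet Ω (m i)) _)
    (fun k => (generateFrom_piiUnionInter_measurableSet m _).symm) ?_
  rw [iIndepSets_iff]
  intro K E hE
  choose! t htp g hg hEg using hE
  have hp : ∀ k ∈ K, ∀ i ∈ t k, p i = k := fun k hk i hi => htp k hk hi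
  have hE' : ∀ k ∈ K, E k = ⋂ i ∈ t k, g (p i) i := fun k hk => by
    rw [hEg k hk]
    exact iInter₂_congr fun i hi => by rw [hp k hk i hi]
  have hmeas : ∀ k ∈ K, ∀ i ∈ t k, MeasurableSet[m i] (g (p i) i) := fun k hk i hi => by
    rw [hp k hk i hi]
    exact hg k hk i hi
  have hdisj : (K : Set κ).PairwiseDisjoint t := fun k hk k' hk' hne =>
    Finset.disjoint_left.2 fun i hi hi' => hne ((hp k hk i hi).symm.trans (hp k' hk' i hi'))
  calc μ (⋂ k ∈ K, E k) = μ (⋂ i ∈ K.biUnion t, g (p i) i) := by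
        rw [Finset.set_biInter_biUnion]
        exact congrArg μ (iInter₂_congr hE')
    _ = ∏ k ∈ K, ∏ i ∈ t k, μ (g (p i) i) := by
        rw [hm.meas_biInter fun i hi => ?_, Finset.prod_biUnion hdisj]
        obtain ⟨k, hk, hik⟩ := Finset.mem_biUnion.1 hi
        exact hmeas k hk i hik
    _ = ∏ k ∈ K, μ (E k) :=
        Finset.prod_congr rfl fun k hk => by rw [hE' k hk, hm.meas_biInter (hmeas k hk)]

section RandomIndex

variable {M : Option ℕ → MeasurableSpace Ω} {K : Ω → ℕ}

theorem iIndep.measure_forall_lt_mem (hM : iIndep M μ) (hle : ∀ k, M k ≤ mΩ)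
    (hK : Measurable[M none] K) {A : ℕ → Set Ω} (hA : ∀ j, MeasurableSet[M (some j)] (A j))
    {c : ℝ≥0∞} (hc : ∀ j, μ (A j) = c) :
    μ {ω | ∀ j < K ω, ω ∈ A j} = ∑' n, μ (K ⁻¹' {n}) * c ^ n := by
  have hunion : {ω | ∀ j < K ω, ω ∈ A j} = ⋃ n, K ⁻¹' {n} ∩ ⋂ j ∈ Finset.range n, A j := by
    ext ω
    simp
  have hdisj : Pairwise (Disjoint on fun n => K ⁻¹' {n} ∩ ⋂ j ∈ Finset.range n, A j) :=
    fun a b hab => ((disjoint_singleton.2 hab).preimage K).mono inter_subset_left inter_subset_left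
  rw [hunion, measure_iUnion hdisj fun n => (hle none _ (hK (measurableSet_singleton n))).inter
    (.biInter (to_countable _) fun j _ => hle _ _ (hA j))]
  refine tsum_congr fun n => ?_
  have hE : ∀ k ∈ insert none ((Finset.range n).image some),
      MeasurableSet[M k] (k.elim (K ⁻¹' {n}) A) := by
    rintro (_ | j) -
    exacts [hK (measurableSet_singleton n), hA j]
  have := hM.meas_biInter hE
  rw [Finset.set_biInter_insert, Finset.set_biInter_finset_image, Finset.prod_insert (by simp),
    Finset.prod_image (by simp)] at this
  simpa [hc] using this

theorem iIndep.measure_sum_range_pos [IsProbabilityMeasure μ] (hM : iIndep M μ)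
    (hle : ∀ k, M k ≤ mΩ) (hK : Measurable[M none] K) {Z : ℕ → Ω → ℝ}
    (hZ : ∀ j, Measurable[M (some j)] (Z j)) (hZ_nonneg : ∀ j, 0 ≤ᵐ[μ] Z j) {c : ℝ≥0∞}
    (hc : ∀ j, μ {ω | Z j ω ≤ 0} = c) :
    μ {ω | 0 < ∑ j ∈ Finset.range (K ω), Z j ω} = 1 - ∑' n, μ (K ⁻¹' {n}) * c ^ n := by
  have hsum : Measurable fun ω => ∑ j ∈ Finset.range (K ω), Z j ω :=
    (hK.mono (hle none) le_rfl).sum_range_comp fun j => (hZ j).mono (hle _) le_rfl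
  have hzero : {ω | ∑ j ∈ Finset.range (K ω), Z j ω ≤ 0} =ᵐ[μ] {ω | ∀ j < K ω, Z j ω ≤ 0} := by
    filter_upwards [ae_all_iff.2 hZ_nonneg] with ω hω
    change (_ ≤ 0) = ∀ j < K ω, Z j ω ≤ 0
    rw [← not_lt, Finset.sum_pos_iff_of_nonneg fun j _ => hω j]
    simp only [Finset.mem_range, not_exists, not_and, not_lt]
  have hforall := hM.measure_forall_lt_mem hle hK
    (fun j => measurableSet_le (hZ j) measurable_const) hc
  simp only [mem_ofPred_eq] at hforall
  rw [← hforall, ← measure_congr hzero, ← prob_compl_eq_one_sub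
    (measurableSet_le hsum measurable_const)]
  congr 1
  ext ω
  simp

end RandomIndex

end ProbabilityTheory

theorem measure_Iic_zero_toReal_of_measure_Icc (ν : Measure ℝ) [IsProbabilityMeasure ν]
    (hν : ν (Icc 0 1) = 1) : (ν (Iic 0)).toReal = 1 - (ν (Ioc 0 1)).toReal := by
  have hIic : ν (Iic 1) = 1 := le_antisymm prob_le_one (hν ▸ measure_mono Icc_subset_Iic_self)
  have hsplit : ν (Iic 0) + ν (Ioc 0 1) = 1 := by
    rw [← measure_union (Iic_disjoint_Ioc le_rfl) measurableSet_Ioc,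
      Iic_union_Ioc_eq_Iic zero_le_one, hIic]
  rw [eq_sub_iff_add_eq, ← ENNReal.toReal_add (measure_ne_top _ _) (measure_ne_top _ _), hsplit,
    ENNReal.toReal_one]

/-- The blocks of `fam N N' X` that are used as independent units: `N` alone (`none`), and for
each `i` the row `N'_i, X_{i0}, X_{i1}, …` (`some i`). -/
def famBlock : Unit ⊕ ℕ ⊕ ℕ × ℕ → Option ℕ
  | .inl _ => none
  | .inr (.inl i) => some i
  | .inr (.inr p) => some p.1

def famRow (i : ℕ) : Option ℕ → Unit ⊕ ℕ ⊕ ℕ × ℕ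
  | none => .inr (.inl i)
  | some j => .inr (.inr (i, j))

theorem famRow_injective (i : ℕ) : Injective (famRow i) := by
  rintro (_ | j) (_ | j') h <;> simp_all [famRow]

section Model

variable {Ω : Type*} {mΩ : MeasurableSpace Ω} {μ : Measure Ω}
  {N : Ω → ℕ} {N' : ℕ → Ω → ℕ} {X : ℕ → ℕ → Ω → ℝ}

theorem measurable_fam (hN : Measurable N) (hN' : ∀ i, Measurable (N' i))
    (hX : ∀ i j, Measurable (X i j)) : ∀ idx, Measurable (fam N N' X idx)
  | .inl _ => hN
  | .inr (.inl i) => hN' i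
  | .inr (.inr (i, j)) => hX i j

theorem measurable_fam_block (idx : Unit ⊕ ℕ ⊕ ℕ × ℕ) :
    Measurable[⨆ idx' ∈ famBlock ⁻¹' {famBlock idx},
      (famTypeMeasurableSpace idx').comap (fam N N' X idx')] (fam N N' X idx) :=
  (comap_measurable _).mono
    (le_iSup₂ (f := fun idx' (_ : idx' ∈ famBlock ⁻¹' {famBlock idx}) =>
      (famTypeMeasurableSpace idx').comap (fam N N' X idx')) idx rfl) le_rfl

theorem measure_rowSum_pos [IsProbabilityMeasure μ]
    (hN'm : ∀ i, Measurable (N' i)) (hXm : ∀ i j, Measurable (X i j))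
    (hInd : iIndepFun (m := famTypeMeasurableSpace) (fam N N' X) μ) {F' : Measure ℕ}
    {ν : Measure ℝ} (hν : ∀ᵐ x ∂ν, 0 ≤ x) (i : ℕ) (hN' : μ.map (N' i) = F')
    (hX : ∀ j, μ.map (X i j) = ν) :
    μ {ω | 0 < ∑ j ∈ Finset.range (N' i ω), X i j ω} = 1 - ∑' m, F' {m} * ν (Iic 0) ^ m := by
  have hrow := hInd.iIndep.precomp (famRow_injective i)
  rw [hrow.measure_sum_range_pos (K := N' i) (Z := X i) (c := ν (Iic 0))
    (fun | none => (hN'm i).comap_le | some j => (hXm i j).comap_le) (comap_measurable _)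
    (fun j => comap_measurable _)
    (fun j => ae_of_ae_map (p := (0 ≤ ·)) (hXm i j).aemeasurable (by rwa [hX j]))
    (fun j => by rw [← hX j, Measure.map_apply (hXm i j) measurableSet_Iic]; rfl)]
  simp_rw [← hN', Measure.map_apply (hN'm i) (measurableSet_singleton _)]

theorem measure_inv_one_add_sum_inv_pos [IsProbabilityMeasure μ] (hN : Measurable N)
    (hN'm : ∀ i, Measurable (N' i)) (hXm : ∀ i j, Measurable (X i j))
    (hInd : iIndepFun (m := famTypeMeasurableSpace) (fam N N' X) μ) {F F' : Measure ℕ}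
    {ν : Measure ℝ} (hν : ∀ᵐ x ∂ν, 0 ≤ x) (hNF : μ.map N = F) (hN' : ∀ i, μ.map (N' i) = F')
    (hX : ∀ i j, μ.map (X i j) = ν) :
    μ {ω | 0 < (1 + ∑ i ∈ Finset.range (N ω),
        (ENNReal.ofReal (∑ j ∈ Finset.range (N' i ω), X i j ω))⁻¹)⁻¹}
      = ∑' n, F {n} * (1 - ∑' m, F' {m} * ν (Iic 0) ^ m) ^ n := by
  have hfam := measurable_fam hN hN'm hXm
  have hblocks := hInd.iIndep.iIndep_iSup_fiber (fun idx => (hfam idx).comap_le) famBlock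
  have hevent : {ω | 0 < (1 + ∑ i ∈ Finset.range (N ω),
      (ENNReal.ofReal (∑ j ∈ Finset.range (N' i ω), X i j ω))⁻¹)⁻¹}
      = {ω | ∀ i < N ω, ω ∈ {ω | 0 < ∑ j ∈ Finset.range (N' i ω), X i j ω}} := by
    ext ω
    simp only [mem_ofPred_eq, ENNReal.inv_one_add_sum_inv_pos_iff, Finset.mem_range,
      ENNReal.ofReal_pos]
  rw [hevent, hblocks.measure_forall_lt_mem (K := N)
    (A := fun i => {ω | 0 < ∑ j ∈ Finset.range (N' i ω), X i j ω})
    (fun k => iSup₂_le fun idx _ => (hfam idx).comap_le)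
    (measurable_fam_block (.inl ())) (fun i => measurableSet_lt measurable_const
      ((measurable_fam_block (.inr (.inl i))).sum_range_comp
        fun j => measurable_fam_block (.inr (.inr (i, j)))))
    fun i => measure_rowSum_pos hN'm hXm hInd hν i (hN' i) (hX i)]
  simp_rw [← hNF, Measure.map_apply hN (measurableSet_singleton _)]

end Model

/-- `Ŷ = (1 + Σᵢ Sᵢ⁻¹)⁻¹ > 0` iff all `Sᵢ > 0` (conventions `1/0 = ∞`,
`1/∞ = 0`); consequently, for `N ~ F`, `N'_i ~ F'`, `X_{ij} ~ ν` all independent and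
`Y = (1 + Σ_{i<N} (Σ_{j<N'_i} X_{ij})⁻¹)⁻¹`, one has `P(Y > 0) = φ(1 − φ'(1 − ν((0,1])))`. -/
theorem prob_Y_pos :
    (∀ N : ℕ, 1 ≤ N → ∀ S : Fin N → ℝ≥0∞,
      (0 < (1 + ∑ i, (S i)⁻¹)⁻¹ ↔ ∀ i, 0 < S i)) ∧
    (∀ (Ω : Type) (_ : MeasurableSpace Ω) (μ : Measure Ω), IsProbabilityMeasure μ →
      ∀ (F F' : Measure ℕ), IsProbabilityMeasure F → IsProbabilityMeasure F' →
      ∀ (ν : Measure ℝ), IsProbabilityMeasure ν → ν (Set.Icc 0 1) = 1 →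
      ∀ (N : Ω → ℕ) (N' : ℕ → Ω → ℕ) (X : ℕ → ℕ → Ω → ℝ),
        Measurable N → (∀ i, Measurable (N' i)) → (∀ i j, Measurable (X i j)) →
        iIndepFun (m := famTypeMeasurableSpace) (fam N N' X) μ →
        μ.map N = F → (∀ i, μ.map (N' i) = F') → (∀ i j, μ.map (X i j) = ν) →
        (μ {ω | 0 < (1 + ∑ i ∈ Finset.range (N ω),
            (ENNReal.ofReal (∑ j ∈ Finset.range (N' i ω), X i j ω))⁻¹)⁻¹}).toReal
          = pgfMeas F (1 - pgfMeas F' (1 - (ν (Set.Ioc 0 1)).toReal))) := by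
  refine ⟨fun n _ S => by simpa using ENNReal.inv_one_add_sum_inv_pos_iff Finset.univ S, ?_⟩
  intro Ω _ μ _ F F' _ _ ν _ hν N N' X hN hN'm hXm hInd hNF hN' hX
  have hν_nonneg : ∀ᵐ x ∂ν, 0 ≤ x :=
    ((ae_mem_iff_measure_eq measurableSet_Icc.nullMeasurableSet).2 (by rw [hν, measure_univ])).mono
      fun x hx => hx.1
  have hQ : ∑' m, F' {m} * ν (Iic 0) ^ m ≤ 1 :=
    tsum_measure_singleton_mul_pow_le_one F' prob_le_one
  rw [measure_inv_one_add_sum_inv_pos hN hN'm hXm hInd hν_nonneg hNF hN' hX,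
    ← pgfMeas_toReal F (ENNReal.sub_ne_top ENNReal.one_ne_top),
    ENNReal.toReal_sub_of_le hQ ENNReal.one_ne_top, ENNReal.toReal_one,
    ← pgfMeas_toReal F' (measure_ne_top ν _), measure_Iic_zero_toReal_of_measure_Icc ν hν]
end

section
/- Let A and B be n×n Hermitian matrices with empirical spectral distribution functions F_A(t) = (1/n)·#{i : λ_i(A) ≤ t} and F_B(t) = (1/n)·#{i : λ_i(B) ≤ t}. Then sup_{t∈ℝ} |F_A(t) − F_B(t)| ≤ rank(A − B)/n. -/
/-!
Let `U` be the span of the eigenvectors of `A` with eigenvalue `≤ t`, `V` the span of those of `B`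
with eigenvalue `> t`, and `W = ker (A - B)`. On `U` we have `re ⟪x, A x⟫ ≤ t‖x‖²`, on `V \ {0}` we
have `re ⟪x, B x⟫ > t‖x‖²`, and on `W` the two forms agree, so `U ⊓ V ⊓ W = 0`. Counting dimensions,
`#{λᵢ(A) ≤ t} + (n - #{λᵢ(B) ≤ t}) + (n - rank (A - B)) ≤ 2n`; the same holds with `A`, `B`
exchanged.
-/

open Finset Module Submodule
open scoped InnerProductSpace

namespace OrthonormalBasis

variable {𝕜 E ι : Type*} [RCLike 𝕜] [NormedAddCommGroup E] [InnerProductSpace 𝕜 E] [Fintype ι]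
  (b : OrthonormalBasis ι 𝕜 E)

theorem repr_eq_zero_of_mem_span_image {s : Set ι} {x : E} (hx : x ∈ span 𝕜 (b '' s)) {i : ι}
    (hi : i ∉ s) : b.repr x i = 0 := by
  rw [← b.coe_toBasis, Basis.mem_span_image] at hx
  rw [← b.coe_toBasis_repr_apply, ← Finsupp.notMem_support_iff]
  exact fun h => hi (hx h)

theorem finrank_span_image (s : Set ι) [DecidablePred (· ∈ s)] :
    finrank 𝕜 (span 𝕜 (b '' s)) = #{i | i ∈ s} := by
  have hli : LinearIndependent 𝕜 fun i : s => b i :=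
    b.orthonormal.linearIndependent.comp _ Subtype.val_injective
  rw [Set.image_eq_range, finrank_span_eq_card hli, Fintype.card_subtype]

variable {T : E →ₗ[𝕜] E}

theorem repr_apply_of_apply_eq_smul {μ : ι → 𝕜} (hb : ∀ i, T (b i) = μ i • b i) (x : E) (i : ι) :
    b.repr (T x) i = μ i * b.repr x i := by
  classical
  conv_lhs => rw [← b.sum_repr x]
  simp [hb, smul_smul, b.repr_self, Pi.single_apply, mul_comm]

theorem re_inner_apply_self_sub_mul_norm_sq {μ : ι → ℝ} (hb : ∀ i, T (b i) = (μ i : 𝕜) • b i)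
    (x : E) (t : ℝ) :
    RCLike.re ⟪x, T x⟫_𝕜 - t * ‖x‖ ^ 2 = ∑ i, (μ i - t) * ‖b.repr x i‖ ^ 2 := by
  rw [← b.repr.inner_map_map, ← b.repr.norm_map, EuclideanSpace.norm_sq_eq, PiLp.inner_apply,
    map_sum, mul_sum, ← sum_sub_distrib]
  refine sum_congr rfl fun i _ => ?_
  rw [repr_apply_of_apply_eq_smul b hb, RCLike.inner_apply, mul_assoc, RCLike.mul_conj, ← RCLike.ofReal_pow,
    ← RCLike.ofReal_mul, RCLike.ofReal_re]
  ring

theorem re_inner_apply_self_le_of_mem_span {μ : ι → ℝ} (hb : ∀ i, T (b i) = (μ i : 𝕜) • b i)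
    {t : ℝ} {x : E} (hx : x ∈ span 𝕜 (b '' {i | μ i ≤ t})) :
    RCLike.re ⟪x, T x⟫_𝕜 ≤ t * ‖x‖ ^ 2 := by
  rw [← sub_nonpos, re_inner_apply_self_sub_mul_norm_sq b hb]
  refine sum_nonpos fun i _ => ?_
  by_cases hi : μ i ≤ t
  · exact mul_nonpos_of_nonpos_of_nonneg (sub_nonpos.2 hi) (sq_nonneg _)
  · simp [b.repr_eq_zero_of_mem_span_image hx hi]

theorem lt_re_inner_apply_self_of_mem_span {μ : ι → ℝ} (hb : ∀ i, T (b i) = (μ i : 𝕜) • b i)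
    {t : ℝ} {x : E} (hx : x ∈ span 𝕜 (b '' {i | t < μ i})) (hx0 : x ≠ 0) :
    t * ‖x‖ ^ 2 < RCLike.re ⟪x, T x⟫_𝕜 := by
  rw [← sub_pos, re_inner_apply_self_sub_mul_norm_sq b hb]
  obtain ⟨i, hi⟩ : ∃ i, b.repr x i ≠ 0 := by
    by_contra! h
    exact hx0 (b.repr.map_eq_zero_iff.1 (PiLp.ext h))
  have hμi : t < μ i := by_contra fun h => hi (b.repr_eq_zero_of_mem_span_image hx h)
  refine sum_pos' (fun j _ => ?_)
    ⟨i, mem_univ i, mul_pos (sub_pos.2 hμi) (pow_pos (norm_pos_iff.2 hi) 2)⟩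
  by_cases hj : t < μ j
  · exact mul_nonneg (sub_pos.2 hj).le (sq_nonneg _)
  · simp [b.repr_eq_zero_of_mem_span_image hx hj]

end OrthonormalBasis

theorem Submodule.finrank_add_finrank_add_finrank_le_of_inf_inf_eq_bot {K V : Type*}
    [DivisionRing K] [AddCommGroup V] [Module K V] [FiniteDimensional K V]
    {U W X : Submodule K V} (h : U ⊓ (W ⊓ X) = ⊥) :
    finrank K U + finrank K W + finrank K X ≤ 2 * finrank K V := by
  have hU := Submodule.finrank_add_finrank_le_of_disjoint (disjoint_iff.2 h)
  have hWX := Submodule.finrank_sup_add_finrank_inf_eq W X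
  have := (W ⊔ X).finrank_le
  omega

namespace Matrix

variable {𝕜 ι : Type*} [RCLike 𝕜] [Fintype ι] [DecidableEq ι]

theorem rank_neg {m n R : Type*} [Fintype n] [CommRing R] (A : Matrix m n R) :
    (-A).rank = A.rank := by
  have : (-A).mulVecLin = -A.mulVecLin := LinearMap.ext fun v => neg_mulVec v A
  rw [rank, rank, this, LinearMap.range_neg]

theorem finrank_ker_toEuclideanLin_add_rank (A : Matrix ι ι 𝕜) :
    finrank 𝕜 (LinearMap.ker (toEuclideanLin A)) + A.rank = Fintype.card ι := by
  rw [rank_eq_finrank_range_toLin A (PiLp.basisFun 2 𝕜 ι) (PiLp.basisFun 2 𝕜 ι), add_comm,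
    ← toLpLin_eq_toLin, LinearMap.finrank_range_add_finrank_ker, finrank_euclideanSpace]

theorem IsHermitian.toEuclideanLin_eigenvectorBasis {A : Matrix ι ι 𝕜} (hA : A.IsHermitian)
    (i : ι) :
    toEuclideanLin A (hA.eigenvectorBasis i) = (hA.eigenvalues i : 𝕜) • hA.eigenvectorBasis i := by
  apply WithLp.ofLp_injective
  simpa only [ofLp_toLpLin, toLin'_apply, WithLp.ofLp_smul, RCLike.real_smul_eq_coe_smul (K := 𝕜)]
    using hA.mulVec_eigenvectorBasis i

theorem IsHermitian.card_eigenvalues_le_le_add_rank_sub {A B : Matrix ι ι 𝕜} (hA : A.IsHermitian)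
    (hB : B.IsHermitian) (t : ℝ) :
    #{i | hA.eigenvalues i ≤ t} ≤ #{i | hB.eigenvalues i ≤ t} + (A - B).rank := by
  set U := span 𝕜 (hA.eigenvectorBasis '' {i | hA.eigenvalues i ≤ t})
  set V := span 𝕜 (hB.eigenvectorBasis '' {i | t < hB.eigenvalues i})
  set W := LinearMap.ker (toEuclideanLin (A - B))
  have hUVW : U ⊓ (V ⊓ W) = ⊥ := by
    refine (Submodule.eq_bot_iff _).2 fun x ⟨hxU, hxV, hxW⟩ => by_contra fun hx0 => ?_
    have hAB : toEuclideanLin A x = toEuclideanLin B x := by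
      rwa [SetLike.mem_coe, LinearMap.mem_ker, map_sub, LinearMap.sub_apply, sub_eq_zero] at hxW
    have hle := hA.eigenvectorBasis.re_inner_apply_self_le_of_mem_span
      hA.toEuclideanLin_eigenvectorBasis hxU
    have hlt := hB.eigenvectorBasis.lt_re_inner_apply_self_of_mem_span
      hB.toEuclideanLin_eigenvectorBasis hxV hx0
    rw [hAB] at hle
    exact hle.not_gt hlt
  have hdim := finrank_add_finrank_add_finrank_le_of_inf_inf_eq_bot hUVW
  rw [OrthonormalBasis.finrank_span_image, OrthonormalBasis.finrank_span_image,
    finrank_euclideanSpace] at hdim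
  have hW : finrank 𝕜 W + (A - B).rank = Fintype.card ι :=
    finrank_ker_toEuclideanLin_add_rank (A - B)
  have hcard := card_filter_add_card_filter_not (s := univ) fun i => hB.eigenvalues i ≤ t
  simp only [Set.mem_ofPred_eq, not_le, card_univ] at hdim hcard
  omega

end Matrix

/-- **rank difference inequality.** For Hermitian `A, B`,
the empirical spectral distribution functions differ by at most `rank(A−B)/n`. -/
theorem rank_difference_inequality {n : ℕ} (A B : Matrix (Fin n) (Fin n) ℂ)
    (hA : A.IsHermitian) (hB : B.IsHermitian) :
    ∀ t : ℝ,
      |((Finset.univ.filter fun i => hA.eigenvalues i ≤ t).card : ℝ) / n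
        - ((Finset.univ.filter fun i => hB.eigenvalues i ≤ t).card : ℝ) / n|
        ≤ ((A - B).rank : ℝ) / n := by
  intro t
  have hAB := hA.card_eigenvalues_le_le_add_rank_sub hB t
  have hBA := hB.card_eigenvalues_le_le_add_rank_sub hA t
  rw [← Matrix.rank_neg, neg_sub] at hBA
  rw [div_sub_div_same, abs_div, Nat.abs_cast]
  refine div_le_div_of_nonneg_right (abs_sub_le_iff.2 ⟨?_, ?_⟩) n.cast_nonneg
  · exact sub_le_iff_le_add'.2 (mod_cast hAB)
  · exact sub_le_iff_le_add'.2 (mod_cast hBA)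
end

section
/- Let c > 0 and φ(x) = exp(c(x−1)). Then φ'' is log-concave on (0,1), and the first local extremum x₀ of M(x) = c·x·x̄ + φ(1−x) + φ(1−x̄) − 1 (where x̄ = φ'(1−x)/φ'(1) = e^{−cx}) is a global maximum of M on [0,1]. Moreover, with q the smallest solution in (0,1) of q = exp(−c·exp(−cq)), the maximum value equals q + e^{−cq} + cq·e^{−cq} − 1. -/
/-!
Since `M'(x) = c² x̄ (x̿ - x)`, `M` increases up to the least fixed point `x₀` of `x ↦ x̿`.
Past `x₀`, as long as `x ≤ x̄`, one has `x̿ ≤ x`: the derivative of `x̿ - x` is positive exactly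
where the concave function `log c² - cx - c x̄` is positive, i.e. on an interval, so `x̿ - x`
cannot rise, fall and rise again between the fixed points `x₀` and `x̄₀`. The tangent-line bound
`eᵘ ≥ 1 + u` gives `M(x) ≤ M(x̄)`, which moves every other `x` into one of these two regions.
-/

open Real Set

lemma hasDerivAt_exp_mul_sub_one (c x : ℝ) :
    HasDerivAt (fun x => exp (c * (x - 1))) (c * exp (c * (x - 1))) x := by
  have h := ((hasDerivAt_id x).sub_const 1).const_mul c |>.exp
  simp only [id_eq, mul_one] at h
  exact h.congr_deriv (mul_comm _ _)

lemma deriv_deriv_exp_mul_sub_one (c : ℝ) :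
    deriv (deriv fun x => exp (c * (x - 1))) = fun x => c ^ 2 * exp (c * (x - 1)) := by
  have h : deriv (fun x => exp (c * (x - 1))) = fun x => c * exp (c * (x - 1)) :=
    funext fun x => (hasDerivAt_exp_mul_sub_one c x).deriv
  rw [h]
  exact funext fun x => ((hasDerivAt_exp_mul_sub_one c x).const_mul c).deriv.trans (by ring)

lemma concaveOn_log_deriv_deriv_exp_mul_sub_one {c : ℝ} (hc : c ≠ 0) :
    ConcaveOn ℝ univ fun x => log (deriv (deriv fun x => exp (c * (x - 1))) x) := by
  have hlog (x : ℝ) : log (c ^ 2 * exp (c * (x - 1))) = c * x + (log (c ^ 2) - c) := by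
    rw [log_mul (by positivity) (exp_ne_zero _), log_exp]; ring
  rw [deriv_deriv_exp_mul_sub_one]
  simp only [hlog]
  exact ⟨convex_univ, fun x _ y _ a b _ _ hab => le_of_eq (by
    simp only [smul_eq_mul]; linear_combination (log (c ^ 2) - c) * hab)⟩

namespace PoissonM

/-- The paper's `x̄`. -/
noncomputable def bar (c x : ℝ) : ℝ := exp (-(c * x))

noncomputable def barbar (c x : ℝ) : ℝ := bar c (bar c x)

/-- The paper's `M`, with `φ(1 - x) = x̄` and `φ(1 - x̄) = x̿`. -/
noncomputable def M (c x : ℝ) : ℝ := c * x * bar c x + bar c x + barbar c x - 1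

variable {c : ℝ}

lemma bar_pos (c x : ℝ) : 0 < bar c x := exp_pos _

lemma bar_lt_one (hc : 0 < c) {x : ℝ} (hx : 0 < x) : bar c x < 1 :=
  exp_lt_one_iff.mpr (by simpa using mul_pos hc hx)

lemma strictAnti_bar (hc : 0 < c) : StrictAnti (bar c) := fun _ _ h =>
  exp_lt_exp.mpr (by simpa using mul_lt_mul_of_pos_left h hc)

lemma mem_Ioo_of_barbar_eq (hc : 0 < c) {x : ℝ} (hx : barbar c x = x) : x ∈ Ioo 0 1 :=
  hx ▸ ⟨bar_pos _ _, bar_lt_one hc (bar_pos _ _)⟩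

lemma hasDerivAt_bar (c x : ℝ) : HasDerivAt (bar c) (-c * bar c x) x := by
  have h := (hasDerivAt_const_mul (-c) (x := x)).exp
  simp only [neg_mul] at h
  exact h.congr_deriv (by rw [bar, mul_comm, neg_mul])

lemma hasDerivAt_barbar_sub_id (c x : ℝ) :
    HasDerivAt (fun y => barbar c y - y) (c ^ 2 * bar c x * barbar c x - 1) x := by
  have h := ((hasDerivAt_bar c (bar c x)).comp x (hasDerivAt_bar c x)).sub (hasDerivAt_id x)
  exact h.congr_deriv (by simp only [barbar]; ring)

lemma hasDerivAt_M (c x : ℝ) :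
    HasDerivAt (M c) (c ^ 2 * bar c x * (barbar c x - x)) x := by
  have h := ((((hasDerivAt_id x).const_mul c).mul (hasDerivAt_bar c x)).add
    (hasDerivAt_bar c x)).add ((hasDerivAt_bar c (bar c x)).comp x (hasDerivAt_bar c x))
  exact (h.sub_const 1).congr_deriv (by simp only [barbar, id_eq]; ring)

lemma differentiable_M (c : ℝ) : Differentiable ℝ (M c) :=
  fun x => (hasDerivAt_M c x).differentiableAt

lemma continuous_barbar (c : ℝ) : Continuous (barbar c) := by
  unfold barbar bar; fun_prop

lemma M_le_M_bar (c y : ℝ) : M c y ≤ M c (bar c y) := by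
  have hkey : bar c (barbar c y) = bar c y * exp (c * y - c * barbar c y) := by
    simp only [bar, barbar, ← exp_add]; ring_nf
  have htangent := mul_le_mul_of_nonneg_left (add_one_le_exp (c * y - c * barbar c y))
    (bar_pos c y).le
  simp only [M, barbar] at hkey htangent ⊢
  nlinarith

lemma convexOn_bar (c : ℝ) : ConvexOn ℝ univ (bar c) :=
  (convexOn_exp.comp_linearMap (LinearMap.lsmul ℝ ℝ (-c))).congr fun x _ => by simp [bar]

lemma concaveOn_neg_mul_sub_mul_bar (hc : 0 ≤ c) :
    ConcaveOn ℝ univ (fun x => -(c * x) - c * bar c x) :=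
  (((convexOn_id convex_univ).smul hc).add ((convexOn_bar c).smul hc)).neg.congr fun x _ => by
    simp only [Pi.neg_apply, Pi.add_apply, id_eq, smul_eq_mul]; ring

lemma ordConnected_setOf_deriv_pos (hc : 0 < c) :
    OrdConnected {x | 0 < c ^ 2 * bar c x * barbar c x - 1} := by
  have hset : {x | 0 < c ^ 2 * bar c x * barbar c x - 1} =
      {x ∈ univ | -log (c ^ 2) < -(c * x) - c * bar c x} := by
    ext x
    have : c ^ 2 * bar c x * barbar c x = exp (log (c ^ 2) + (-(c * x) - c * bar c x)) := by
      rw [exp_add, exp_log (by positivity), barbar, bar, bar, mul_assoc, ← exp_add]; ring_nf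
    simp only [mem_ofPred_eq, mem_univ, true_and, sub_pos, this, one_lt_exp_iff]
    constructor <;> intro h <;> linarith
  rw [hset, ← convex_iff_ordConnected]
  exact (concaveOn_neg_mul_sub_mul_bar hc.le).convex_gt _

lemma not_up_down_up {f : ℝ → ℝ} (hf : Differentiable ℝ f)
    (hf' : OrdConnected {x | 0 < deriv f x}) {a b d e : ℝ} (hab : a < b) (hbd : b < d)
    (hde : d < e) (hup : f a < f b) (hdown : f d < f b) (hup' : f d < f e) : False := by
  obtain ⟨r, hr, hr'⟩ := exists_deriv_eq_slope f hab hf.continuous.continuousOn hf.differentiableOn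
  obtain ⟨s, hs, hs'⟩ := exists_deriv_eq_slope f hbd hf.continuous.continuousOn hf.differentiableOn
  obtain ⟨t, ht, ht'⟩ := exists_deriv_eq_slope f hde hf.continuous.continuousOn hf.differentiableOn
  have hr_pos : 0 < deriv f r := hr' ▸ div_pos (by linarith) (by linarith)
  have ht_pos : 0 < deriv f t := ht' ▸ div_pos (by linarith) (by linarith)
  have hs_neg : deriv f s < 0 := hs' ▸ div_neg_of_neg_of_pos (by linarith) (by linarith)
  have hs_pos : 0 < deriv f s :=
    hf'.out hr_pos ht_pos ⟨by linarith [hr.2, hs.1], by linarith [hs.2, ht.1]⟩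
  linarith

lemma barbar_le_of_fixed_lt_of_lt_bar (hc : 0 < c) {x₀ t : ℝ} (hx₀ : barbar c x₀ = x₀)
    (hx₀t : x₀ < t) (ht : t < bar c t) : barbar c t ≤ t := by
  -- otherwise `x̿ - x` rises on `[x₀, t]`, falls on `[t, t̄]` and rises on `[t̄, x̄₀]`
  by_contra! hlt
  have hderiv : deriv (fun y => barbar c y - y) = fun x => c ^ 2 * bar c x * barbar c x - 1 :=
    funext fun x => (hasDerivAt_barbar_sub_id c x).deriv
  have hbar_t : barbar c (bar c t) < bar c t := strictAnti_bar hc hlt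
  have hbar_x₀ : barbar c (bar c x₀) = bar c x₀ := congrArg (bar c) hx₀
  refine not_up_down_up (fun x => (hasDerivAt_barbar_sub_id c x).differentiableAt)
    (hderiv ▸ ordConnected_setOf_deriv_pos hc) hx₀t ht (strictAnti_bar hc hx₀t) ?_ ?_ ?_ <;>
  linarith

lemma monotoneOn_M {a b : ℝ} (h : ∀ t ∈ Ioo a b, t ≤ barbar c t) : MonotoneOn (M c) (Icc a b) :=
  monotoneOn_of_deriv_nonneg (convex_Icc a b) (differentiable_M c).continuous.continuousOn
    (differentiable_M c).differentiableOn fun t ht => by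
      rw [interior_Icc] at ht
      rw [(hasDerivAt_M c t).deriv]
      exact mul_nonneg (by have := bar_pos c t; positivity) (sub_nonneg.mpr (h t ht))

lemma antitoneOn_M {a b : ℝ} (h : ∀ t ∈ Ioo a b, barbar c t ≤ t) : AntitoneOn (M c) (Icc a b) :=
  antitoneOn_of_deriv_nonpos (convex_Icc a b) (differentiable_M c).continuous.continuousOn
    (differentiable_M c).differentiableOn fun t ht => by
      rw [interior_Icc] at ht
      rw [(hasDerivAt_M c t).deriv]
      exact mul_nonpos_of_nonneg_of_nonpos (by have := bar_pos c t; positivity)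
        (sub_nonpos.mpr (h t ht))

lemma M_le_M_of_fixed_le_of_le_bar (hc : 0 < c) {x₀ z : ℝ} (hx₀ : barbar c x₀ = x₀)
    (hx₀z : x₀ ≤ z) (hz : z ≤ bar c z) : M c z ≤ M c x₀ :=
  antitoneOn_M (fun _ ht => barbar_le_of_fixed_lt_of_lt_bar hc hx₀ ht.1
      (ht.2.trans_le (hz.trans (strictAnti_bar hc ht.2).le)))
    ⟨le_rfl, hx₀z⟩ ⟨hx₀z, le_rfl⟩ hx₀z

lemma lt_barbar_of_lt_isLeast {x₀ y : ℝ} (hx₀ : IsLeast {x ∈ Icc 0 1 | barbar c x = x} x₀)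
    (hy₀ : 0 ≤ y) (hy : y < x₀) : y < barbar c y := by
  by_contra! hle
  obtain ⟨u, hu, hu_root⟩ := intermediate_value_Icc' hy₀
    ((continuous_barbar c).sub continuous_id).continuousOn
    (show (0 : ℝ) ∈ Icc (barbar c y - y) (barbar c 0 - 0) from
      ⟨by linarith, by rw [sub_zero]; exact (bar_pos c _).le⟩)
  have hu_fixed : barbar c u = u := sub_eq_zero.mp hu_root
  have := hx₀.2 ⟨⟨hu.1, by linarith [hu.2, hx₀.1.1.2]⟩, hu_fixed⟩
  linarith [hu.2]

lemma M_le_M_of_isLeast (hc : 0 < c) {x₀ y : ℝ}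
    (hx₀ : IsLeast {x ∈ Icc 0 1 | barbar c x = x} x₀) (hy : 0 ≤ y) : M c y ≤ M c x₀ := by
  have hx₀_fixed := hx₀.1.2
  have hle_of_le : ∀ z, 0 ≤ z → z ≤ x₀ → M c z ≤ M c x₀ := fun z hz hzx₀ =>
    monotoneOn_M (fun t ht => (lt_barbar_of_lt_isLeast hx₀ ht.1.le ht.2).le)
      ⟨hz, hzx₀⟩ ⟨hx₀.1.1.1, le_rfl⟩ hzx₀
  rcases le_or_gt y x₀ with hyx₀ | hx₀y
  · exact hle_of_le y hy hyx₀
  rcases le_or_gt (bar c y) x₀ with hbar | hbar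
  · exact (M_le_M_bar c y).trans (hle_of_le _ (bar_pos c y).le hbar)
  rcases le_or_gt y (bar c y) with hy_bar | hbar_y
  · exact M_le_M_of_fixed_le_of_le_bar hc hx₀_fixed hx₀y.le hy_bar
  · exact (M_le_M_bar c y).trans
      (M_le_M_of_fixed_le_of_le_bar hc hx₀_fixed hbar.le (strictAnti_bar hc hbar_y).le)

lemma isLeast_sInf_fixedPoints_barbar (hc : 0 ≤ c) :
    IsLeast {x ∈ Icc 0 1 | barbar c x = x} (sInf {x ∈ Icc 0 1 | barbar c x = x}) := by
  have hcompact : IsCompact {x ∈ Icc (0 : ℝ) 1 | barbar c x = x} :=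
    isCompact_Icc.inter_right (isClosed_eq (continuous_barbar c) continuous_id)
  have hbarbar_one : barbar c 1 ≤ 1 := exp_le_one_iff.mpr (by
    simpa using mul_nonneg hc (bar_pos c 1).le)
  obtain ⟨u, hu, hu_root⟩ := intermediate_value_Icc' zero_le_one
    ((continuous_barbar c).sub continuous_id).continuousOn
    (show (0 : ℝ) ∈ Icc (barbar c 1 - 1) (barbar c 0 - 0) from
      ⟨by linarith, by rw [sub_zero]; exact (bar_pos c _).le⟩)
  obtain ⟨x₀, hx₀⟩ := hcompact.exists_isLeast ⟨u, hu, sub_eq_zero.mp hu_root⟩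
  rwa [hx₀.csInf_eq]

end PoissonM

/-- For the Poisson(c) generating function `φ(x) = exp(c(x−1))`:
`φ''` is log-concave on `(0,1)`; the first local extremum
`x₀ = inf{x ∈ [0,1] : x̿ = x}` of `M` is a global maximum of `M` on `[0,1]`; and with
`q` the smallest solution in `(0,1)` of `q = exp(−c·exp(−cq))`, the maximum value is
`q + e^{−cq} + cq·e^{−cq} − 1`. -/
theorem poisson_M_max (c : ℝ) (hc : 0 < c) :
    let φ : ℝ → ℝ := fun x => Real.exp (c * (x - 1))
    let M : ℝ → ℝ := fun x =>
      c * x * Real.exp (-(c * x)) + φ (1 - x) + φ (1 - Real.exp (-(c * x))) - 1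
    let x₀ : ℝ := sInf {x ∈ Set.Icc (0 : ℝ) 1 | Real.exp (-(c * Real.exp (-(c * x)))) = x}
    let q : ℝ := sInf {x ∈ Set.Ioo (0 : ℝ) 1 | x = Real.exp (-(c * Real.exp (-(c * x))))}
    ConcaveOn ℝ (Set.Ioo 0 1) (fun x => Real.log (deriv (deriv φ) x)) ∧
    (∀ y ∈ Set.Icc (0 : ℝ) 1, M y ≤ M x₀) ∧
    M x₀ = q + Real.exp (-(c * q)) + c * q * Real.exp (-(c * q)) - 1 := by
  intro φ M x₀ q
  have hM : M = PoissonM.M c := funext fun y => by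
    simp only [M, φ, PoissonM.M, PoissonM.barbar, PoissonM.bar]; ring_nf
  have hx₀ : IsLeast {x ∈ Icc 0 1 | PoissonM.barbar c x = x} x₀ :=
    PoissonM.isLeast_sInf_fixedPoints_barbar hc.le
  have hq : q = x₀ := congrArg sInf <| Set.ext fun x =>
    ⟨fun hx => ⟨Ioo_subset_Icc_self hx.1, hx.2.symm⟩,
      fun hx => ⟨PoissonM.mem_Ioo_of_barbar_eq hc hx.2, hx.2.symm⟩⟩
  refine ⟨(concaveOn_log_deriv_deriv_exp_mul_sub_one hc.ne').subset (subset_univ _)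
      (convex_Ioo 0 1), fun y hy => hM ▸ PoissonM.M_le_M_of_isLeast hc hx₀ hy.1, ?_⟩
  rw [hq, hM]
  simp only [PoissonM.M, hx₀.1.2, PoissonM.bar]
  ring
end
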